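/- arXiv:1906.11163 — 3 statements merged into one kernel-verified Lean document; each statement's English description precedes it below -/
import Mathlib

section
/- Let p be a prime and M a module over S = ℤ[t]/(t^p − 1) with ker(1 − t^M) = 0. Then N(t^M) = 0 and the cokernel of (1 − t^M) is a vector space over ℤ/p. -/
/-!
Since `(1 - t) * N(t) = 1 - t ^ p = 0`, injectivity of `1 - t` forces `N(t) = 0`. For the
cokernel, `p - N(t) = ∑_{j<p} (1 - t ^ j)` and every `1 - t ^ j` is a multiple of `1 - t`, so
`p • x ≡ N(t) x = 0` modulo the image of `1 - t`.
-/

/-- The norm endomorphism `N(t) = 1 + t + ⋯ + t^{p-1}` of a module over `ℤ[t]/(t^p - 1)`,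
encoded as an abelian group `M` with an endomorphism `t` satisfying `t^p = 1`. -/
def normEnd (p : ℕ) {M : Type*} [AddCommGroup M] (t : AddMonoid.End M) : AddMonoid.End M :=
  ∑ j ∈ Finset.range p, t ^ j

open Finset

theorem natCast_sub_geom_sum_eq_one_sub_mul {R : Type*} [Ring R] (x : R) (n : ℕ) :
    (n : R) - ∑ j ∈ range n, x ^ j = (1 - x) * ∑ j ∈ range n, ∑ i ∈ range j, x ^ i := by
  rw [mul_sum]
  simp only [mul_neg_geom_sum, sum_sub_distrib, sum_const, card_range, nsmul_one]

section

variable {p : ℕ} {M : Type*} [AddCommGroup M] {t : AddMonoid.End M}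

theorem one_sub_mul_normEnd (ht : t ^ p = 1) : (1 - t) * normEnd p t = 0 := by
  rw [normEnd, mul_neg_geom_sum, ht, sub_self]

theorem normEnd_eq_zero_of_injective (ht : t ^ p = 1)
    (hinj : Function.Injective ⇑((1 : AddMonoid.End M) - t)) :
    normEnd p t = 0 := by
  ext x
  apply hinj
  rw [AddMonoid.End.zero_apply, map_zero]
  exact DFunLike.congr_fun (one_sub_mul_normEnd ht) x

theorem nsmul_sub_normEnd_mem_range_one_sub (x : M) :
    p • x - normEnd p t x ∈ AddMonoidHom.range (1 - t) :=
  ⟨(∑ j ∈ range p, ∑ i ∈ range j, t ^ i) x,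
    (DFunLike.congr_fun (natCast_sub_geom_sum_eq_one_sub_mul t p) x).symm⟩

theorem nsmul_eq_zero_of_normEnd_eq_zero (hN : normEnd p t = 0)
    (y : M ⧸ AddMonoidHom.range (1 - t)) : p • y = 0 := by
  induction y using QuotientAddGroup.induction_on with
  | H x =>
    have hx := nsmul_sub_normEnd_mem_range_one_sub (p := p) (t := t) x
    rw [hN, AddMonoid.End.zero_apply, sub_zero] at hx
    rwa [← QuotientAddGroup.mk_nsmul, QuotientAddGroup.eq_zero_iff]

end

theorem stmt7_general (p : ℕ) {M : Type*} [AddCommGroup M] (t : AddMonoid.End M)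
    (ht : t ^ p = 1) (hker : AddMonoidHom.ker ((1 : AddMonoid.End M) - t) = ⊥) :
    normEnd p t = 0 ∧
    ∀ y : M ⧸ AddMonoidHom.range ((1 : AddMonoid.End M) - t), p • y = 0 := by
  have hN := normEnd_eq_zero_of_injective ht ((AddMonoidHom.ker_eq_bot_iff _).mp hker)
  exact ⟨hN, nsmul_eq_zero_of_normEnd_eq_zero hN⟩

/-- For a prime `p` and a module `M` over `S = ℤ[t]/(t^p − 1)` with
`ker(1 − t^M) = 0`, one has `N(t^M) = 0`, and the cokernel of `1 − t^M` is a `ℤ/p`-vector space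
(i.e. it is annihilated by `p`). -/
theorem stmt7 (p : ℕ) (hp : p.Prime) {M : Type*} [AddCommGroup M] (t : AddMonoid.End M)
    (ht : t ^ p = 1) (hker : AddMonoidHom.ker ((1 : AddMonoid.End M) - t) = ⊥) :
    normEnd p t = 0 ∧
    ∀ y : M ⧸ AddMonoidHom.range ((1 : AddMonoid.End M) - t), p • y = 0 :=
  stmt7_general p t ht hker
end

section
/- Let p be a prime and M a module over S = ℤ[t]/(t^p − 1) with im(1 − t^M) = M. Then N(t^M) = 0 and ker(1 − t^M) is a vector space over ℤ/p. -/
/-!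
The geometric-sum identity `N(t) (1 - t) = 1 - t ^ p = 0` makes `N(t)` vanish on the image of
`1 - t`, which is all of `M`. On `ker (1 - t)`, the fixed points of `t`, every power of `t` acts
trivially, so `N(t)` acts there as multiplication by `p`; hence `p` kills the kernel.
-/

open Function

namespace AddMonoid.End

theorem eq_zero_of_mul_eq_zero_of_surjective {M : Type*} [AddCommMonoid M]
    {a b : AddMonoid.End M} (hab : a * b = 0) (hb : Surjective b) : a = 0 := by
  ext m
  obtain ⟨y, rfl⟩ := hb m
  exact DFunLike.congr_fun hab y

theorem mem_ker_one_sub_iff {M : Type*} [AddCommGroup M] {t : AddMonoid.End M} {x : M} :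
    x ∈ AddMonoidHom.ker ((1 : AddMonoid.End M) - t) ↔ t x = x :=
  sub_eq_zero.trans eq_comm

end AddMonoid.End

section normEnd

variable {M : Type*} [AddCommGroup M] {p : ℕ} {t : AddMonoid.End M}

theorem normEnd_mul_one_sub (ht : t ^ p = 1) : normEnd p t * (1 - t) = 0 := by
  rw [normEnd, geom_sum_mul_neg, ht, sub_self]

theorem normEnd_apply_of_apply_eq {x : M} (hx : t x = x) : normEnd p t x = p • x := by
  change (∑ j ∈ Finset.range p, t ^ j) • x = p • x
  simp [Finset.sum_smul, AddMonoid.End.smul_def, AddMonoid.End.coe_pow, iterate_fixed hx]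

theorem normEnd_eq_zero_of_range_one_sub_eq_top (ht : t ^ p = 1)
    (hsurj : AddMonoidHom.range ((1 : AddMonoid.End M) - t) = ⊤) : normEnd p t = 0 :=
  AddMonoid.End.eq_zero_of_mul_eq_zero_of_surjective (normEnd_mul_one_sub ht)
    (AddMonoidHom.range_eq_top.mp hsurj)

end normEnd

theorem stmt9_general (p : ℕ) {M : Type*} [AddCommGroup M] (t : AddMonoid.End M)
    (ht : t ^ p = 1) (hsurj : AddMonoidHom.range ((1 : AddMonoid.End M) - t) = ⊤) :
    normEnd p t = 0 ∧
    ∀ x ∈ AddMonoidHom.ker ((1 : AddMonoid.End M) - t), p • x = 0 := by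
  have hN := normEnd_eq_zero_of_range_one_sub_eq_top ht hsurj
  refine ⟨hN, fun x hx => ?_⟩
  rw [← normEnd_apply_of_apply_eq (AddMonoid.End.mem_ker_one_sub_iff.mp hx), hN,
    AddMonoid.End.zero_apply]

/-- For a prime `p` and a module `M` over `S = ℤ[t]/(t^p − 1)` with
`im(1 − t^M) = M`, one has `N(t^M) = 0`, and `ker(1 − t^M)` is a `ℤ/p`-vector space
(i.e. it is annihilated by `p`). -/
theorem stmt9 (p : ℕ) (hp : p.Prime) {M : Type*} [AddCommGroup M] (t : AddMonoid.End M)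
    (ht : t ^ p = 1) (hsurj : AddMonoidHom.range ((1 : AddMonoid.End M) - t) = ⊤) :
    normEnd p t = 0 ∧
    ∀ x ∈ AddMonoidHom.ker ((1 : AddMonoid.End M) - t), p • x = 0 :=
  stmt9_general p t ht hsurj
end

section
/- Let p be a prime and M a module over S₂ = ℤ[s,t]/((1 − s)(1 − t), N(s) + N(t) − p). The following are equivalent: (1) multiplication by p is invertible on M; (2) im(1 − t^M) = ker(1 − s^M), im(1 − s^M) = ker(1 − t^M), and M = ker(1 − s^M) ⊕ ker(1 − t^M); (3) (1 − s^M) restricts to an invertible map on ker(1 − t^M) and (1 − t^M) restricts to an invertible map on ker(1 − s^M). -/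
/-!
Write `u = 1 - s`, `v = 1 - t` and `N(x) = 1 + x + ⋯ + x^(p-1)`. Since `u v = 0`, `u` maps
`M` into `B = ker v` and `v` maps `M` into `A = ker u`. On `B` we have `N(t) = p`, hence
`N(s) = 0`. The congruences `N(s) ≡ p (mod u)` and `N(s) ≡ u^(p-1) (mod p)`, the latter coming
from `(1 - s)^p ≡ 1 - s^p (mod p)`, therefore say that on `B` both `u W = p` and
`u^(p-1) = -p H` for polynomials `W`, `H` in `s`; so `u` is bijective on `B` exactly when `p`
is, and symmetrically for `v` on `A`. Conditions (2) and (3) are equivalent for any pair of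
endomorphisms with `im u ⊆ ker v` and `im v ⊆ ker u`, and under them `M = A ⊕ B`, so that `p`
is invertible on `M` as soon as it is invertible on `A` and on `B`.
-/

open Finset Polynomial Set

lemma exists_geom_sum_eq_natCast_sub_mul {R : Type*} [CommRing R] (n : ℕ) :
    ∃ W : R[X], ∑ j ∈ range n, (X : R[X]) ^ j = (n : R[X]) - (1 - X) * W := by
  obtain ⟨W, hW⟩ :=
    X_sub_C_dvd_sub_C_eval (a := (1 : R)) (p := ∑ j ∈ range n, (X : R[X]) ^ j)
  refine ⟨W, ?_⟩
  simp only [eval_geom_sum, one_pow, sum_const, card_range, nsmul_eq_mul, mul_one, map_natCast,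
    map_one] at hW
  linear_combination hW

lemma geom_sum_eq_one_sub_pow_of_charP {R : Type*} [CommRing R] [IsDomain R] (p : ℕ)
    [hp : Fact p.Prime] [CharP R p] {x : R} (hx : x ≠ 1) :
    ∑ j ∈ range p, x ^ j = (1 - x) ^ (p - 1) := by
  refine mul_right_cancel₀ (sub_ne_zero.2 hx.symm) ?_
  rw [geom_sum_mul_neg, ← pow_succ, Nat.sub_add_cancel hp.out.one_le, sub_pow_char, one_pow]

lemma exists_geom_sum_eq_one_sub_pow_add_mul {p : ℕ} (hp : p.Prime) :
    ∃ H : ℤ[X], ∑ j ∈ range p, (X : ℤ[X]) ^ j = (1 - X) ^ (p - 1) + (p : ℤ[X]) * H := by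
  have := Fact.mk hp
  have hmod : (∑ j ∈ range p, (X : ℤ[X]) ^ j - (1 - X) ^ (p - 1)).map
      (Int.castRingHom (ZMod p)) = 0 := by
    rw [Polynomial.map_sub, sub_eq_zero, Polynomial.map_pow, Polynomial.map_sub, Polynomial.map_one,
      map_X, Polynomial.map_sum]
    simp only [Polynomial.map_pow, map_X]
    exact geom_sum_eq_one_sub_pow_of_charP p (by simpa using X_ne_C (1 : ZMod p))
  obtain ⟨H, hH⟩ : C (p : ℤ) ∣ ∑ j ∈ range p, (X : ℤ[X]) ^ j - (1 - X) ^ (p - 1) :=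
    (C_dvd_iff_dvd_coeff _ _).2 fun i => by
      rw [← ZMod.intCast_zmod_eq_zero_iff_dvd, ← eq_intCast (Int.castRingHom (ZMod p)),
        ← coeff_map, hmod, coeff_zero]
  refine ⟨H, ?_⟩
  rw [C_eq_natCast] at hH
  linear_combination hH

lemma Commute.one_sub_one_sub {R : Type*} [Ring R] {a b : R} (h : Commute a b) :
    Commute (1 - a) (1 - b) :=
  (Commute.one_left _).sub_left ((Commute.one_right a).sub_right h)

namespace AddMonoidHom

variable {M N : Type*} [AddCommGroup M] [AddCommGroup N]

lemma bijOn_range_of_isCompl_ker (f : M →+ N) {B : AddSubgroup M} (h : IsCompl f.ker B) :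
    BijOn f B f.range := by
  refine ⟨fun x _ => ⟨x, rfl⟩, ?_, ?_⟩
  · refine (injOn_iff_map_eq_zero f B).2 fun x hxB hx => ?_
    exact AddSubgroup.disjoint_def.1 h.disjoint hx hxB
  · rintro _ ⟨x, rfl⟩
    obtain ⟨a, ha, b, hb, rfl⟩ := AddSubgroup.mem_sup.1 (h.sup_eq_top ▸ AddSubgroup.mem_top x)
    exact ⟨b, hb, by rw [map_add, mem_ker.1 ha, zero_add]⟩

lemma range_eq_and_isCompl_ker_of_bijOn (f : M →+ M) {B : AddSubgroup M} (hf : f.range ≤ B)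
    (h : BijOn f B B) : f.range = B ∧ IsCompl f.ker B := by
  refine ⟨le_antisymm hf fun y hy => ?_, ⟨?_, ?_⟩⟩
  · obtain ⟨x, -, rfl⟩ := h.surjOn hy
    exact ⟨x, rfl⟩
  · exact AddSubgroup.disjoint_def.2 fun hx hxB =>
      (injOn_iff_map_eq_zero f B).1 h.injOn _ hxB (mem_ker.1 hx)
  · refine codisjoint_iff.2 (eq_top_iff.2 fun x _ => ?_)
    obtain ⟨z, hz, hfz⟩ := h.surjOn (hf ⟨x, rfl⟩)
    refine AddSubgroup.mem_sup.2 ⟨x - z, ?_, z, hz, sub_add_cancel x z⟩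
    rw [mem_ker, map_sub, hfz, sub_self]

lemma range_eq_ker_and_isCompl_iff_bijOn {f g : M →+ M} (hfg : f.range ≤ g.ker)
    (hgf : g.range ≤ f.ker) :
    (g.range = f.ker ∧ f.range = g.ker ∧ IsCompl f.ker g.ker) ↔
      BijOn f g.ker g.ker ∧ BijOn g f.ker f.ker := by
  constructor
  · rintro ⟨hg, hf, h⟩
    have hfB := f.bijOn_range_of_isCompl_ker h
    have hgA := g.bijOn_range_of_isCompl_ker h.symm
    rw [hf] at hfB
    rw [hg] at hgA
    exact ⟨hfB, hgA⟩
  · rintro ⟨hf, hg⟩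
    obtain ⟨hfr, h⟩ := f.range_eq_and_isCompl_ker_of_bijOn hfg hf
    exact ⟨(g.range_eq_and_isCompl_ker_of_bijOn hgf hg).1, hfr, h⟩

lemma bijective_of_bijOn_of_isCompl (f : M →+ M) {A B : AddSubgroup M} (h : IsCompl A B)
    (hA : BijOn f A A) (hB : BijOn f B B) : Function.Bijective f := by
  have hsplit (x : M) : ∃ a ∈ A, ∃ b ∈ B, a + b = x :=
    AddSubgroup.mem_sup.1 (h.sup_eq_top ▸ AddSubgroup.mem_top x)
  refine ⟨(injective_iff_map_eq_zero f).2 fun x hx => ?_, fun x => ?_⟩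
  · obtain ⟨a, ha, b, hb, rfl⟩ := hsplit x
    rw [map_add, add_eq_zero_iff_eq_neg] at hx
    have hfa : f a = 0 := AddSubgroup.disjoint_def.1 h.disjoint (hA.mapsTo ha)
      (hx ▸ neg_mem_iff.2 (hB.mapsTo hb))
    have hfb : f b = 0 := by rwa [hfa, zero_eq_neg] at hx
    rw [(injOn_iff_map_eq_zero f A).1 hA.injOn a ha hfa,
      (injOn_iff_map_eq_zero f B).1 hB.injOn b hb hfb, add_zero]
  · obtain ⟨a, ha, b, hb, rfl⟩ := hsplit x
    obtain ⟨a', -, rfl⟩ := hA.surjOn ha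
    obtain ⟨b', -, rfl⟩ := hB.surjOn hb
    exact ⟨a' + b', map_add f a' b'⟩

lemma bijOn_nsmul_ker (p : ℕ) (g : M →+ M) (h : Function.Bijective fun x : M => p • x) :
    BijOn (fun x : M => p • x) g.ker g.ker := by
  refine ⟨fun x hx => nsmul_mem hx p, h.injective.injOn, fun y hy => ?_⟩
  obtain ⟨x, rfl⟩ := h.surjective y
  refine ⟨x, h.injective ?_, rfl⟩
  simpa only [map_nsmul, smul_zero] using mem_ker.1 hy

end AddMonoidHom

namespace AddMonoid.End

variable {M : Type*} [AddCommGroup M]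

lemma add_apply (f g : AddMonoid.End M) (x : M) : (f + g) x = f x + g x := rfl

lemma sub_apply (f g : AddMonoid.End M) (x : M) : (f - g) x = f x - g x := rfl

lemma mul_apply (f g : AddMonoid.End M) (x : M) : (f * g) x = f (g x) := rfl

lemma mem_ker {f : AddMonoid.End M} {x : M} : x ∈ AddMonoidHom.ker f ↔ f x = 0 := Iff.rfl

lemma finsetSum_apply {ι : Type*} (s : Finset ι) (f : ι → AddMonoid.End M) (x : M) :
    (∑ i ∈ s, f i) x = ∑ i ∈ s, f i x :=
  AddMonoidHom.finsetSum_apply f s x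

lemma range_le_ker_of_mul_eq_zero {f g : AddMonoid.End M} (h : g * f = 0) :
    AddMonoidHom.range f ≤ AddMonoidHom.ker g := by
  rintro _ ⟨x, rfl⟩
  exact DFunLike.congr_fun h x

lemma mapsTo_ker_of_commute {f g : AddMonoid.End M} (h : Commute f g) :
    MapsTo g (AddMonoidHom.ker f) (AddMonoidHom.ker f) := fun x hx =>
  mem_ker.2 <| by rw [← mul_apply, h.eq, mul_apply, mem_ker.1 hx, map_zero]

lemma mem_ker_one_sub {t : AddMonoid.End M} {x : M} :
    x ∈ AddMonoidHom.ker ((1 : AddMonoid.End M) - t) ↔ t x = x :=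
  mem_ker.trans <| by rw [sub_apply, one_apply, sub_eq_zero, eq_comm]

lemma geom_sum_apply_of_apply_eq {t : AddMonoid.End M} {x : M} (hx : t x = x) (n : ℕ) :
    (∑ j ∈ range n, t ^ j) x = n • x := by
  rw [finsetSum_apply]
  simp [coe_pow, Function.iterate_fixed hx]

lemma bijOn_iff_bijOn_nsmul {u W H : AddMonoid.End M} {B : AddSubgroup M} {n p : ℕ}
    (hu : MapsTo u B B) (hWB : MapsTo W B B) (hHB : MapsTo H B B)
    (huW : Commute u W) (hW : ∀ x ∈ B, u (W x) = p • x)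
    (hH : ∀ x ∈ B, (u ^ n) x = -(p • H x)) :
    BijOn u B B ↔ BijOn (fun x : M => p • x) B B := by
  have hp := injOn_iff_map_eq_zero (DistribSMul.toAddMonoidHom M p) B
  constructor
  · intro h
    have hpow : BijOn (u ^ n) B B := by rw [coe_pow]; exact h.iterate n
    refine ⟨fun x hx => nsmul_mem hx p, hp.2 fun x hx hpx => ?_, fun y hy => ?_⟩
    · refine (injOn_iff_map_eq_zero (u ^ n) B).1 hpow.injOn x hx ?_
      rw [hH x hx, ← map_nsmul, show p • x = 0 from hpx, map_zero, neg_zero]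
    · obtain ⟨z, hz, rfl⟩ := hpow.surjOn hy
      exact ⟨-H z, neg_mem (hHB hz), (smul_neg p (H z)).trans (hH z hz).symm⟩
  · intro h
    refine ⟨hu, (injOn_iff_map_eq_zero u B).2 fun x hx hux => ?_, fun y hy => ?_⟩
    · refine hp.1 h.injOn x hx ?_
      change p • x = 0
      rw [← hW x hx, ← mul_apply, huW.eq, mul_apply, hux, map_zero]
    · obtain ⟨x, hx, rfl⟩ := h.surjOn hy
      exact ⟨W x, hWB hx, hW x hx⟩

lemma bijOn_one_sub_iff_bijOn_nsmul {p : ℕ} (hp : p.Prime) {s t : AddMonoid.End M}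
    (hst : Commute s t)
    (hN : (∑ j ∈ range p, s ^ j) + (∑ j ∈ range p, t ^ j) = (p : AddMonoid.End M)) :
    BijOn ⇑((1 : AddMonoid.End M) - s) (AddMonoidHom.ker ((1 : AddMonoid.End M) - t))
        (AddMonoidHom.ker ((1 : AddMonoid.End M) - t)) ↔
      BijOn (fun x : M => p • x) (AddMonoidHom.ker ((1 : AddMonoid.End M) - t))
        (AddMonoidHom.ker ((1 : AddMonoid.End M) - t)) := by
  obtain ⟨W, hW⟩ := exists_geom_sum_eq_natCast_sub_mul (R := ℤ) p
  obtain ⟨H, hH⟩ := exists_geom_sum_eq_one_sub_pow_add_mul hp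
  have hcomm (P : ℤ[X]) : Commute ((1 : AddMonoid.End M) - t) (aeval s P) := by
    rw [aeval_eq_smeval]
    exact (smeval_commute_left ℤ P ((Commute.one_right s).sub_right hst)).symm
  have hNs (x : M) (hx : x ∈ AddMonoidHom.ker ((1 : AddMonoid.End M) - t)) :
      (∑ j ∈ range p, s ^ j) x = 0 := by
    have h := DFunLike.congr_fun hN x
    rwa [add_apply, geom_sum_apply_of_apply_eq (mem_ker_one_sub.1 hx), natCast_apply,
      add_eq_right] at h
  have hW' : ∑ j ∈ range p, s ^ j = p - (1 - s) * aeval s W := by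
    simpa using congrArg (aeval s) hW
  have hH' : ∑ j ∈ range p, s ^ j = (1 - s) ^ (p - 1) + p * aeval s H := by
    simpa using congrArg (aeval s) hH
  refine bijOn_iff_bijOn_nsmul (n := p - 1)
    (mapsTo_ker_of_commute hst.symm.one_sub_one_sub)
    (mapsTo_ker_of_commute (hcomm W)) (mapsTo_ker_of_commute (hcomm H)) ?_
    (fun x hx => ?_) (fun x hx => ?_)
  · have h := (Commute.all (1 - X) W).map (aeval s)
    rwa [map_sub, map_one, aeval_X] at h
  · have h := DFunLike.congr_fun hW' x
    rw [hNs x hx, sub_apply, mul_apply, natCast_apply, eq_comm, sub_eq_zero] at h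
    exact h.symm
  · have h := DFunLike.congr_fun hH' x
    rw [hNs x hx, add_apply, mul_apply, natCast_apply, eq_comm, add_eq_zero_iff_eq_neg] at h
    exact h

theorem bijective_nsmul_iff_bijOn_one_sub {p : ℕ} (hp : p.Prime) {s t : AddMonoid.End M}
    (hst : Commute s t)
    (h0 : ((1 : AddMonoid.End M) - s) * ((1 : AddMonoid.End M) - t) = 0)
    (hN : (∑ j ∈ range p, s ^ j) + (∑ j ∈ range p, t ^ j) = (p : AddMonoid.End M)) :
    (Function.Bijective fun x : M => p • x) ↔
      BijOn ⇑((1 : AddMonoid.End M) - s) (AddMonoidHom.ker ((1 : AddMonoid.End M) - t))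
          (AddMonoidHom.ker ((1 : AddMonoid.End M) - t)) ∧
        BijOn ⇑((1 : AddMonoid.End M) - t) (AddMonoidHom.ker ((1 : AddMonoid.End M) - s))
          (AddMonoidHom.ker ((1 : AddMonoid.End M) - s)) := by
  have hs := bijOn_one_sub_iff_bijOn_nsmul hp hst hN
  have ht := bijOn_one_sub_iff_bijOn_nsmul hp hst.symm ((add_comm _ _).trans hN)
  refine ⟨fun h => ⟨hs.2 (AddMonoidHom.bijOn_nsmul_ker p _ h),
    ht.2 (AddMonoidHom.bijOn_nsmul_ker p _ h)⟩, fun h => ?_⟩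
  have hcompl := (AddMonoidHom.range_eq_and_isCompl_ker_of_bijOn _
    (range_le_ker_of_mul_eq_zero (hst.symm.one_sub_one_sub.eq.trans h0)) h.1).2
  exact (DistribSMul.toAddMonoidHom M p).bijective_of_bijOn_of_isCompl hcompl (ht.1 h.2) (hs.1 h.1)

end AddMonoid.End

/-- Let `p` be a prime and `M` a module over
`S₂ = ℤ[s,t]/((1 − s)(1 − t), N(s) + N(t) − p)`, encoded as an abelian group with two commuting
endomorphisms `s`, `t` satisfying the two defining relations.  The following are equivalent:
(1) multiplication by `p` is invertible on `M`; (2) `im(1 − t) = ker(1 − s)`,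
`im(1 − s) = ker(1 − t)` and `M = ker(1 − s) ⊕ ker(1 − t)` (internal direct sum, i.e. the two
kernels are complementary subgroups); (3) `1 − s` restricts to an invertible map on
`ker(1 − t)` and `1 − t` restricts to an invertible map on `ker(1 − s)`. -/
theorem stmt13 (p : ℕ) (hp : p.Prime) {M : Type*} [AddCommGroup M]
    (s t : AddMonoid.End M) (hcomm : s * t = t * s)
    (hst : ((1 : AddMonoid.End M) - s) * ((1 : AddMonoid.End M) - t) = 0)
    (hN : (∑ j ∈ Finset.range p, s ^ j) + (∑ j ∈ Finset.range p, t ^ j) =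
      (p : AddMonoid.End M)) :
    ((Function.Bijective fun x : M => p • x) ↔
      (AddMonoidHom.range ((1 : AddMonoid.End M) - t) =
          AddMonoidHom.ker ((1 : AddMonoid.End M) - s) ∧
        AddMonoidHom.range ((1 : AddMonoid.End M) - s) =
          AddMonoidHom.ker ((1 : AddMonoid.End M) - t) ∧
        IsCompl (AddMonoidHom.ker ((1 : AddMonoid.End M) - s))
          (AddMonoidHom.ker ((1 : AddMonoid.End M) - t)))) ∧
    ((Function.Bijective fun x : M => p • x) ↔
      (Set.BijOn ⇑((1 : AddMonoid.End M) - s)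
          (AddMonoidHom.ker ((1 : AddMonoid.End M) - t) : Set M)
          (AddMonoidHom.ker ((1 : AddMonoid.End M) - t) : Set M) ∧
        Set.BijOn ⇑((1 : AddMonoid.End M) - t)
          (AddMonoidHom.ker ((1 : AddMonoid.End M) - s) : Set M)
          (AddMonoidHom.ker ((1 : AddMonoid.End M) - s) : Set M))) := by
  have hc : Commute s t := hcomm
  have h13 := AddMonoid.End.bijective_nsmul_iff_bijOn_one_sub hp hc hst hN
  have h23 := AddMonoidHom.range_eq_ker_and_isCompl_iff_bijOn
    (AddMonoid.End.range_le_ker_of_mul_eq_zero (hc.symm.one_sub_one_sub.eq.trans hst))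
    (AddMonoid.End.range_le_ker_of_mul_eq_zero hst)
  exact ⟨h13.trans h23.symm, h13⟩
end
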